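/- Let n ≥ 3 be odd and let K_n be the complete graph on n vertices. The perfect-matching system of K_n has no common zero over ℂ, and the minimum degree of a Nullstellensatz certificate for it equals ⌊n/2⌋ = (n−1)/2: there exists a Nullstellensatz certificate of degree (n−1)/2, and every Nullstellensatz certificate — every choice of polynomials Δ_v (v ∈ V(K_n)) and Θ_{e,e'} (for pairs of distinct adjacent edges) with ∑_v Δ_v·((∑_{e∋v} x_e) − 1) + ∑ Θ_{e,e'}·x_e x_{e'} = 1 — has degree at least (n−1)/2. -/

import Mathlib

open MvPolynomial Finset

/-- The perfect-matching vertex polynomial `(∑_{e ∋ v} x_e) − 1`. -/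
noncomputable def pmVertexPoly {V : Type*} [Fintype V] [DecidableEq V]
    (G : SimpleGraph V) [DecidableRel G.Adj] (v : V) :
    MvPolynomial ↥G.edgeSet ℂ :=
  (∑ e ∈ Finset.univ.filter (fun e : ↥G.edgeSet => v ∈ (e : Sym2 V)), X e) - 1

/-- The sum `∑ Θ_{e,e'} · x_e x_{e'}` over pairs of distinct edges sharing a
vertex. -/
noncomputable def pairSum {V : Type*} [Fintype V] [DecidableEq V]
    (G : SimpleGraph V) [DecidableRel G.Adj]
    (Θ : ↥G.edgeSet → ↥G.edgeSet → MvPolynomial ↥G.edgeSet ℂ) :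
    MvPolynomial ↥G.edgeSet ℂ :=
  ∑ q ∈ (Finset.univ ×ˢ Finset.univ).filter
      (fun q : ↥G.edgeSet × ↥G.edgeSet => q.1 ≠ q.2 ∧
        ∃ v : V, v ∈ (q.1 : Sym2 V) ∧ v ∈ (q.2 : Sym2 V)),
    Θ q.1 q.2 * (X q.1 * X q.2)

/-- The degree of a Nullstellensatz certificate `(Δ, Θ)` for the
perfect-matching system: the maximum of the degrees of the `Δ_v` and of the
`Θ_{e,e'}` over pairs of distinct edges sharing a vertex. -/
noncomputable def pmCertDeg {V : Type*} [Fintype V] [DecidableEq V]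
    (G : SimpleGraph V) [DecidableRel G.Adj]
    (Δ : V → MvPolynomial ↥G.edgeSet ℂ)
    (Θ : ↥G.edgeSet → ↥G.edgeSet → MvPolynomial ↥G.edgeSet ℂ) : ℕ :=
  max (Finset.univ.sup fun v : V => (Δ v).totalDegree)
    (((Finset.univ ×ˢ Finset.univ).filter
        (fun q : ↥G.edgeSet × ↥G.edgeSet => q.1 ≠ q.2 ∧
          ∃ v : V, v ∈ (q.1 : Sym2 V) ∧ v ∈ (q.2 : Sym2 V))).sup
      fun q => (Θ q.1 q.2).totalDegree)

instance instDecCompleteGraphAdj (n : ℕ) :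
    DecidableRel (SimpleGraph.completeGraph (Fin n)).Adj :=
  fun a b => inferInstanceAs (Decidable (a ≠ b))

namespace Stmt19

variable {n : ℕ}

abbrev E (n : ℕ) := ↥(SimpleGraph.completeGraph (Fin n)).edgeSet

lemma mem_edgeSet_cg {v u : Fin n} (h : u ≠ v) :
    s(v, u) ∈ (SimpleGraph.completeGraph (Fin n)).edgeSet := by
  rw [SimpleGraph.mem_edgeSet]
  exact fun e => h e.symm

def edg (v u : Fin n) (h : u ≠ v) : E n := ⟨s(v,u), mem_edgeSet_cg h⟩

lemma edge_not_diag (e : E n) : ¬ (e : Sym2 (Fin n)).IsDiag :=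
  (SimpleGraph.completeGraph (Fin n)).not_isDiag_of_mem_edgeSet e.2

lemma other_ne {v : Fin n} {e : E n} (hv : v ∈ (e : Sym2 (Fin n))) :
    Sym2.Mem.other' hv ≠ v := by
  intro h
  apply edge_not_diag e
  rw [← Sym2.other_spec' hv, h]
  exact Sym2.mk_isDiag_iff.mpr rfl

lemma sum_incid {β : Type*} [AddCommMonoid β] (v : Fin n)
    (F : E n → β) (Fu : Fin n → β)
    (hFu : ∀ u (h : u ≠ v), Fu u = F (edg v u h)) :
    ∑ e ∈ univ.filter (fun e : E n => v ∈ (e : Sym2 (Fin n))), F e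
      = ∑ u ∈ univ.erase v, Fu u := by
  refine Finset.sum_bij'
    (i := fun e he => Sym2.Mem.other' ((Finset.mem_filter.mp he).2))
    (j := fun u hu => edg v u (Finset.ne_of_mem_erase hu)) ?_ ?_ ?_ ?_ ?_
  · intro e he
    exact Finset.mem_erase.mpr ⟨other_ne _, Finset.mem_univ _⟩
  · intro u hu
    refine Finset.mem_filter.mpr ⟨Finset.mem_univ _, ?_⟩
    exact Sym2.mem_mk_left v u
  · intro e he
    apply Subtype.ext
    exact Sym2.other_spec' ((Finset.mem_filter.mp he).2)
  · intro u hu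
    exact Sym2.congr_right.mp (Sym2.other_spec' _)
  · intro e he
    rw [hFu _ (other_ne ((Finset.mem_filter.mp he).2))]
    congr 1
    apply Subtype.ext
    exact (Sym2.other_spec' ((Finset.mem_filter.mp he).2)).symm


/-- `M` is a (partial) matching: distinct edges share no vertex. -/
def IsM (M : Finset (E n)) : Prop :=
  ∀ e ∈ M, ∀ f ∈ M, e ≠ f →
    ∀ v : Fin n, ¬(v ∈ (e : Sym2 (Fin n)) ∧ v ∈ (f : Sym2 (Fin n)))

lemma IsM.mono {M M' : Finset (E n)} (h : M ⊆ M') (hM : IsM M') : IsM M :=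
  fun e he f hf hef v hv => hM e (h he) f (h hf) hef v hv

def ends (e : E n) : Finset (Fin n) :=
  univ.filter (fun v => v ∈ (e : Sym2 (Fin n)))

def covered (M : Finset (E n)) : Finset (Fin n) := M.biUnion ends

lemma mem_covered {M : Finset (E n)} {v : Fin n} :
    v ∈ covered M ↔ ∃ e ∈ M, v ∈ (e : Sym2 (Fin n)) := by
  simp [covered, ends]

lemma card_ends (e : E n) : (ends e).card = 2 := by
  obtain ⟨e, he⟩ := e
  induction e with
  | _ a b =>
    have hab : a ≠ b := by
      intro h
      exact (SimpleGraph.completeGraph (Fin n)).not_isDiag_of_mem_edgeSet he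
        (by rw [h]; exact Sym2.mk_isDiag_iff.mpr rfl)
    have : ends (⟨s(a,b), he⟩ : E n) = {a, b} := by
      ext v
      simp [ends, Sym2.mem_iff]
    rw [this, Finset.card_insert_of_notMem (by simpa using hab),
      Finset.card_singleton]

lemma card_covered {M : Finset (E n)} (hM : IsM M) :
    (covered M).card = 2 * M.card := by
  rw [covered, Finset.card_biUnion]
  · rw [Finset.sum_congr rfl (fun e _ => card_ends e), Finset.sum_const,
      smul_eq_mul, mul_comm]
  · intro e he f hf hef
    rw [Function.onFun, Finset.disjoint_left]
    intro v hv hv'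
    apply hM e he f hf hef v
    constructor
    · simpa [ends] using hv
    · simpa [ends] using hv'

/-- The scalar `1/((n-1)(n-3)⋯(n-2k+1))`. -/
noncomputable def fC (n k : ℕ) : ℂ :=
  ∏ j ∈ Finset.range k, ((n : ℂ) - 1 - 2*j)⁻¹

lemma fC_step {k : ℕ} (h2 : 2*k + 2 ≤ n) :
    ((n : ℂ) - 1 - 2*k) * fC n (k+1) = fC n k := by
  have hne : ((n : ℂ) - 1 - 2*k) ≠ 0 := by
    have : ((n : ℂ) - 1 - 2*k) = ((n - (2*k+1) : ℕ) : ℂ) := by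
      push_cast [Nat.cast_sub (by omega : 2*k+1 ≤ n)]
      ring
    rw [this]
    exact_mod_cast (by omega : n - (2*k+1) ≠ 0)
  rw [fC, Finset.prod_range_succ, ← fC, mul_comm (fC n k), ← mul_assoc,
    mul_inv_cancel₀ hne, one_mul]

open scoped Classical in
/-- The weight of a monomial. -/
noncomputable def w (n : ℕ) (α : E n →₀ ℕ) : ℂ :=
  if IsM α.support then fC n α.support.card else 0

lemma w_not_isM {α : E n →₀ ℕ} (h : ¬ IsM α.support) : w n α = 0 := by
  rw [w, if_neg h]

lemma w_isM {α : E n →₀ ℕ} (h : IsM α.support) :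
    w n α = fC n α.support.card := by
  rw [w, if_pos h]

/-- The dual linear functional. -/
noncomputable def L (n : ℕ) : MvPolynomial (E n) ℂ →ₗ[ℂ] ℂ :=
  Finsupp.lsum ℂ (fun α => LinearMap.toSpanSingleton ℂ ℂ (w n α))
    ∘ₗ (AddMonoidAlgebra.coeffLinearEquiv ℂ).toLinearMap

lemma L_monomial (α : E n →₀ ℕ) (c : ℂ) :
    L n (monomial α c) = c * w n α := by
  rw [← single_eq_monomial]
  show Finsupp.lsum ℂ (fun α => LinearMap.toSpanSingleton ℂ ℂ (w n α))
    (Finsupp.single α c) = c * w n α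
  erw [Finsupp.lsum_single]
  rw [LinearMap.toSpanSingleton_apply, smul_eq_mul]

lemma L_one : L n 1 = 1 := by
  have h1 : (1 : MvPolynomial (E n) ℂ) = monomial 0 1 := by
    rw [monomial_zero', C_1]
  rw [h1, L_monomial, w_isM (by intro e he; simp at he)]
  simp [fC]

lemma support_add_single (α : E n →₀ ℕ) (e : E n) :
    (α + Finsupp.single e 1).support = insert e α.support := by
  ext x
  rcases eq_or_ne x e with h | h
  · subst h
    simp [Finsupp.mem_support_iff]
  · rw [Finset.mem_insert, Finsupp.mem_support_iff, Finsupp.add_apply,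
      Finsupp.single_apply, if_neg (fun h' => h h'.symm)]
    simp [Finsupp.mem_support_iff, h]


lemma key (v : Fin n) (α : E n →₀ ℕ) (hd : 2 * α.support.card + 2 ≤ n) :
    ∑ e ∈ univ.filter (fun e : E n => v ∈ (e : Sym2 (Fin n))),
        w n (α + Finsupp.single e 1) = w n α := by
  by_cases hM : IsM α.support
  · by_cases hv : v ∈ covered α.support
    · obtain ⟨f, hf, hvf⟩ := mem_covered.mp hv
      rw [w_isM hM, Finset.sum_eq_single f]
      · have hsupp : (α + Finsupp.single f 1).support = α.support := by
          rw [support_add_single, Finset.insert_eq_self.mpr hf]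
        rw [w_isM (by rw [hsupp]; exact hM), hsupp]
      · intro e he hef
        apply w_not_isM
        rw [support_add_single]
        intro hIsM
        exact hIsM e (Finset.mem_insert_self _ _) f (Finset.mem_insert_of_mem hf)
          hef v ⟨(Finset.mem_filter.mp he).2, hvf⟩
      · intro hfn
        exact (hfn (Finset.mem_filter.mpr ⟨Finset.mem_univ f, hvf⟩)).elim
    · set k := α.support.card with hk
      have hFu : ∀ (u : Fin n) (hu : u ≠ v),
          (if u ∈ covered α.support then (0:ℂ) else fC n (k+1))
            = w n (α + Finsupp.single (edg v u hu) 1) := by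
        intro u hu
        by_cases hucov : u ∈ covered α.support
        · rw [if_pos hucov]
          obtain ⟨f, hf, huf⟩ := mem_covered.mp hucov
          symm
          apply w_not_isM
          rw [support_add_single]
          intro hIsM
          have hef : edg v u hu ≠ f := by
            intro h
            exact hv (mem_covered.mpr ⟨f, hf, h ▸ Sym2.mem_mk_left v u⟩)
          exact hIsM (edg v u hu) (Finset.mem_insert_self _ _) f
            (Finset.mem_insert_of_mem hf) hef u ⟨Sym2.mem_mk_right v u, huf⟩
        · rw [if_neg hucov]
          symm
          have hno : edg v u hu ∉ α.support := fun h =>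
            hv (mem_covered.mpr ⟨_, h, Sym2.mem_mk_left v u⟩)
          have hIsM' : IsM (insert (edg v u hu) α.support) := by
            rintro a ha b hb hab x ⟨hxa, hxb⟩
            rcases Finset.mem_insert.mp ha with ha' | ha' <;>
              rcases Finset.mem_insert.mp hb with hb' | hb'
            · exact hab (ha'.trans hb'.symm)
            · subst ha'
              rcases Sym2.mem_iff.mp hxa with h | h
              · exact hv (mem_covered.mpr ⟨b, hb', h ▸ hxb⟩)
              · exact hucov (mem_covered.mpr ⟨b, hb', h ▸ hxb⟩)
            · subst hb'
              rcases Sym2.mem_iff.mp hxb with h | h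
              · exact hv (mem_covered.mpr ⟨a, ha', h ▸ hxa⟩)
              · exact hucov (mem_covered.mpr ⟨a, ha', h ▸ hxa⟩)
            · exact hM a ha' b hb' hab x ⟨hxa, hxb⟩
          rw [w_isM (by rw [support_add_single]; exact hIsM'),
            support_add_single, Finset.card_insert_of_notMem hno]
      rw [sum_incid v _
        (fun u => if u ∈ covered α.support then (0:ℂ) else fC n (k+1)) hFu]
      rw [w_isM hM, ← hk, Finset.sum_ite, Finset.sum_const_zero, zero_add,
        Finset.sum_const]
      have hsub : covered α.support ⊆ univ.erase v := by
        intro x hx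
        exact Finset.mem_erase.mpr ⟨fun h => hv (h ▸ hx), Finset.mem_univ _⟩
      have hcount :
          ((univ.erase v).filter (fun u => u ∉ covered α.support)).card
            = n - 1 - 2*k := by
        rw [← Finset.sdiff_eq_filter, Finset.card_sdiff_of_subset hsub,
          Finset.card_erase_of_mem (Finset.mem_univ v), Finset.card_univ,
          Fintype.card_fin, card_covered hM]
      rw [hcount, nsmul_eq_mul]
      have hcast : ((n - 1 - 2*k : ℕ) : ℂ) = (n:ℂ) - 1 - 2*k := by
        have h1 : (1:ℕ) ≤ n := by omega
        have h2 : 2*k ≤ n - 1 := by omega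
        push_cast [Nat.cast_sub h2, Nat.cast_sub h1]
        ring
      rw [hcast]
      exact fC_step (by omega)
  · rw [w_not_isM hM]
    apply Finset.sum_eq_zero
    intro e he
    apply w_not_isM
    rw [support_add_single]
    exact fun h => hM (IsM.mono (Finset.subset_insert e _) h)


lemma support_card_le {p : MvPolynomial (E n) ℂ} {α : E n →₀ ℕ}
    (hα : α ∈ p.support) : α.support.card ≤ p.totalDegree := by
  calc α.support.card = ∑ e ∈ α.support, 1 := by
        rw [Finset.sum_const, smul_eq_mul, mul_one]
    _ ≤ ∑ e ∈ α.support, α e := by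
        refine Finset.sum_le_sum fun e he => ?_
        exact Nat.one_le_iff_ne_zero.mpr (Finsupp.mem_support_iff.mp he)
    _ = α.sum fun _ m => m := rfl
    _ ≤ p.totalDegree := MvPolynomial.le_totalDegree hα

lemma monomial_mul_X (α : E n →₀ ℕ) (c : ℂ) (e : E n) :
    (monomial α c : MvPolynomial (E n) ℂ) * X e
      = monomial (α + Finsupp.single e 1) c := by
  rw [X, monomial_mul, mul_one]

lemma L_mul_gV {p : MvPolynomial (E n) ℂ} (hp : 2 * p.totalDegree + 2 ≤ n)
    (v : Fin n) : L n (p * pmVertexPoly (SimpleGraph.completeGraph (Fin n)) v) = 0 := by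
  conv_lhs => rw [p.as_sum, Finset.sum_mul]
  rw [map_sum]
  apply Finset.sum_eq_zero
  intro α hα
  rw [pmVertexPoly, mul_sub, mul_one, Finset.mul_sum]
  rw [map_sub, map_sum]
  have : ∀ e ∈ univ.filter (fun e : E n => v ∈ (e : Sym2 (Fin n))),
      L n ((monomial α (coeff α p) : MvPolynomial (E n) ℂ) * X e)
        = coeff α p * w n (α + Finsupp.single e 1) := by
    intro e _
    rw [monomial_mul_X, L_monomial]
  rw [Finset.sum_congr rfl this, ← Finset.mul_sum, L_monomial,
    key v α (by have := support_card_le hα; omega)]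
  ring

lemma L_mul_pair (p : MvPolynomial (E n) ℂ) {e e' : E n} (hne : e ≠ e')
    (hsh : ∃ x : Fin n, x ∈ (e : Sym2 (Fin n)) ∧ x ∈ (e' : Sym2 (Fin n))) :
    L n (p * (X e * X e')) = 0 := by
  conv_lhs => rw [p.as_sum, Finset.sum_mul]
  rw [map_sum]
  apply Finset.sum_eq_zero
  intro α hα
  rw [← mul_assoc, monomial_mul_X, monomial_mul_X, L_monomial]
  rw [w_not_isM, mul_zero]
  intro hIsM
  have he : e ∈ (α + Finsupp.single e 1 + Finsupp.single e' 1).support := by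
    rw [Finsupp.mem_support_iff]
    simp [Finsupp.single_apply, hne.symm]
  have he' : e' ∈ (α + Finsupp.single e 1 + Finsupp.single e' 1).support := by
    rw [Finsupp.mem_support_iff]
    simp [Finsupp.single_apply]
  obtain ⟨x, hx⟩ := hsh
  exact hIsM e he e' he' hne x hx

lemma mem_filter' {α : Type*} {p : α → Prop} {inst : DecidablePred p} {s : Finset α}
    {a : α} (h : a ∈ @Finset.filter α p inst s) : a ∈ s ∧ p a :=
  Finset.mem_filter.mp h

lemma lower {d : ℕ} (hnd : n = 2*d+1)
    (Δ : Fin n → MvPolynomial (E n) ℂ)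
    (Θ : E n → E n → MvPolynomial (E n) ℂ)
    (hcert : (∑ v : Fin n, Δ v * pmVertexPoly (SimpleGraph.completeGraph (Fin n)) v)
      + pairSum (SimpleGraph.completeGraph (Fin n)) Θ = 1) :
    d ≤ pmCertDeg (SimpleGraph.completeGraph (Fin n)) Δ Θ := by
  by_contra hcon
  push_neg at hcon
  have h' : (Finset.univ.sup fun v : Fin n => (Δ v).totalDegree) < d :=
    lt_of_le_of_lt (le_max_left _ _) hcon
  have hΔ : ∀ v : Fin n, 2 * (Δ v).totalDegree + 2 ≤ n := by
    intro v
    have h1 : (Δ v).totalDegree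
        ≤ Finset.univ.sup (fun v : Fin n => (Δ v).totalDegree) :=
      Finset.le_sup (f := fun v : Fin n => (Δ v).totalDegree)
        (Finset.mem_univ v)
    omega
  have hL := congrArg (L n) hcert
  rw [map_add, map_sum, L_one,
    Finset.sum_eq_zero (fun v _ => L_mul_gV (hΔ v) v), pairSum, map_sum,
    Finset.sum_eq_zero (fun (q : E n × E n) hq => by
      obtain ⟨-, hne, hsh⟩ := mem_filter' hq
      exact L_mul_pair _ hne hsh)] at hL
  norm_num at hL


/-- `f` has a certificate with all coefficient polynomials of degree `≤ d`. -/
def IsCert (n d : ℕ) (f : MvPolynomial (E n) ℂ) : Prop :=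
  ∃ (Δ : Fin n → MvPolynomial (E n) ℂ)
    (Θ : E n → E n → MvPolynomial (E n) ℂ),
    (∀ v, (Δ v).totalDegree ≤ d) ∧ (∀ e e', (Θ e e').totalDegree ≤ d) ∧
    f = (∑ v : Fin n, Δ v * pmVertexPoly (SimpleGraph.completeGraph (Fin n)) v)
      + pairSum (SimpleGraph.completeGraph (Fin n)) Θ

lemma pairSum_zero :
    pairSum (SimpleGraph.completeGraph (Fin n)) (fun _ _ => 0) = 0 := by
  simp [pairSum]

lemma isCert_zero (d : ℕ) : IsCert n d 0 := by
  refine ⟨0, fun _ _ => 0, by simp, by simp, ?_⟩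
  rw [pairSum_zero]
  simp

lemma isCert_add {d : ℕ} {f g : MvPolynomial (E n) ℂ} (hf : IsCert n d f)
    (hg : IsCert n d g) : IsCert n d (f + g) := by
  obtain ⟨Δ₁, Θ₁, hΔ₁, hΘ₁, h₁⟩ := hf
  obtain ⟨Δ₂, Θ₂, hΔ₂, hΘ₂, h₂⟩ := hg
  refine ⟨fun v => Δ₁ v + Δ₂ v, fun e e' => Θ₁ e e' + Θ₂ e e', ?_, ?_, ?_⟩
  · intro v
    exact le_trans (MvPolynomial.totalDegree_add _ _) (max_le (hΔ₁ v) (hΔ₂ v))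
  · intro e e'
    exact le_trans (MvPolynomial.totalDegree_add _ _)
      (max_le (hΘ₁ e e') (hΘ₂ e e'))
  · have hps : pairSum (SimpleGraph.completeGraph (Fin n)) (fun e e' => Θ₁ e e' + Θ₂ e e')
        = pairSum (SimpleGraph.completeGraph (Fin n)) Θ₁
          + pairSum (SimpleGraph.completeGraph (Fin n)) Θ₂ := by
      rw [pairSum, pairSum, pairSum, ← Finset.sum_add_distrib]
      exact Finset.sum_congr rfl fun q _ => add_mul _ _ _
    have hsum : (∑ v : Fin n,
          (Δ₁ v + Δ₂ v) * pmVertexPoly (SimpleGraph.completeGraph (Fin n)) v)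
        = (∑ v : Fin n, Δ₁ v * pmVertexPoly (SimpleGraph.completeGraph (Fin n)) v)
          + ∑ v : Fin n, Δ₂ v * pmVertexPoly (SimpleGraph.completeGraph (Fin n)) v := by
      rw [← Finset.sum_add_distrib]
      exact Finset.sum_congr rfl fun v _ => add_mul _ _ _
    rw [h₁, h₂, hps, hsum]
    ring

lemma isCert_sum {d : ℕ} {ι : Type*} (s : Finset ι)
    (g : ι → MvPolynomial (E n) ℂ) (h : ∀ i ∈ s, IsCert n d (g i)) :
    IsCert n d (∑ i ∈ s, g i) := by
  classical
  induction s using Finset.induction_on with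
  | empty => simpa using isCert_zero d
  | insert _ _ hx ih =>
    rw [Finset.sum_insert hx]
    exact isCert_add (h _ (Finset.mem_insert_self _ _))
      (ih fun i hi => h i (Finset.mem_insert_of_mem hi))

lemma isCert_gV {d : ℕ} (v : Fin n) (p : MvPolynomial (E n) ℂ)
    (hp : p.totalDegree ≤ d) :
    IsCert n d (p * pmVertexPoly (SimpleGraph.completeGraph (Fin n)) v) := by
  refine ⟨fun u => if u = v then p else 0, fun _ _ => 0, ?_, ?_, ?_⟩
  · intro u
    by_cases h : u = v <;> simp [h, hp]
  · intro e e'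
    simp
  · rw [pairSum_zero, add_zero]
    rw [show (∑ u : Fin n, (if u = v then p else 0)
        * pmVertexPoly (SimpleGraph.completeGraph (Fin n)) u)
      = ∑ u : Fin n, (if u = v
        then p * pmVertexPoly (SimpleGraph.completeGraph (Fin n)) u else 0) from
      Finset.sum_congr rfl fun u _ => by split <;> simp]
    rw [Finset.sum_ite_eq' Finset.univ v
      (fun u => p * pmVertexPoly (SimpleGraph.completeGraph (Fin n)) u)]
    simp

lemma isCert_pair {d : ℕ} {q : E n × E n}
    (hq : q ∈ (Finset.univ ×ˢ Finset.univ).filter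
      (fun q : E n × E n => q.1 ≠ q.2 ∧
        ∃ v : Fin n, v ∈ (q.1 : Sym2 (Fin n)) ∧ v ∈ (q.2 : Sym2 (Fin n))))
    (p : MvPolynomial (E n) ℂ) (hp : p.totalDegree ≤ d) :
    IsCert n d (p * (X q.1 * X q.2)) := by
  classical
  refine ⟨0, fun e e' => if (e, e') = q then p else 0, ?_, ?_, ?_⟩
  · intro v
    simp
  · intro e e'
    by_cases h : (e, e') = q <;> simp [h, hp]
  · rw [pairSum]
    rw [Finset.sum_congr rfl
      (f := fun q' : E n × E n => (if (q'.1, q'.2) = q then p else 0) * (X q'.1 * X q'.2))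
      (g := fun q' : E n × E n => if q' = q then p * (X q'.1 * X q'.2) else 0)
      fun q' _ => by
        rw [Prod.mk.eta]
        split <;> simp]
    rw [Finset.sum_ite_eq' _ q (fun q' : E n × E n => p * (X q'.1 * X q'.2)),
      if_pos]
    · simp
    · convert hq


lemma isCert_matching {d : ℕ} (hnd : n = 2*d+1) :
    ∀ m : ℕ, ∀ M : Finset (E n), IsM M → M.card + m = d + 1 →
      IsCert n d (∏ e ∈ M, X e) := by
  intro m
  induction m with
  | zero =>
    intro M hM hcard
    exfalso
    have h1 : (covered M).card = 2 * M.card := card_covered hM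
    have h2 : (covered M).card ≤ n := by
      calc (covered M).card ≤ (univ : Finset (Fin n)).card :=
            Finset.card_le_univ _
        _ = n := by rw [Finset.card_univ, Fintype.card_fin]
    omega
  | succ m ih =>
    intro M hM hcard
    have hcardle : M.card ≤ d := by omega
    have hcov : (covered M).card < n := by
      rw [card_covered hM]
      omega
    have : ((univ : Finset (Fin n)) \ covered M).Nonempty := by
      rw [← Finset.card_pos, Finset.card_sdiff_of_subset (Finset.subset_univ _),
        Finset.card_univ, Fintype.card_fin]
      omega
    obtain ⟨v, hv'⟩ := this
    have hv : v ∉ covered M := (Finset.mem_sdiff.mp hv').2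
    have hdegM : (∏ e ∈ M, (X e : MvPolynomial (E n) ℂ)).totalDegree ≤ d := by
      calc (∏ e ∈ M, (X e : MvPolynomial (E n) ℂ)).totalDegree
          ≤ ∑ e ∈ M, (X e : MvPolynomial (E n) ℂ).totalDegree :=
            MvPolynomial.totalDegree_finset_prod _ _
        _ = M.card := by
            rw [Finset.sum_congr rfl
              (fun e _ => MvPolynomial.totalDegree_X e), Finset.sum_const,
              smul_eq_mul, mul_one]
        _ ≤ d := hcardle
    have hid : (∏ e ∈ M, (X e : MvPolynomial (E n) ℂ))
        = (∑ e ∈ univ.filter (fun e : E n => v ∈ (e : Sym2 (Fin n))),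
            (∏ f ∈ M, X f) * X e)
          + (-(∏ f ∈ M, X f)) * pmVertexPoly (SimpleGraph.completeGraph (Fin n)) v := by
      rw [pmVertexPoly, ← Finset.mul_sum]
      ring
    rw [hid]
    apply isCert_add
    · apply isCert_sum
      intro e he
      have hve : v ∈ (e : Sym2 (Fin n)) := (Finset.mem_filter.mp he).2
      set u := Sym2.Mem.other' hve with hu
      have hspec : s(v, u) = (e : Sym2 (Fin n)) := Sym2.other_spec' hve
      have hue : u ∈ (e : Sym2 (Fin n)) := by
        rw [← hspec]
        exact Sym2.mem_mk_right v u
      by_cases hucov : u ∈ covered M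
      · obtain ⟨f, hfM, huf⟩ := mem_covered.mp hucov
        have hef : e ≠ f := by
          intro h
          exact hv (mem_covered.mpr ⟨f, hfM, h ▸ hve⟩)
        have hP : (∏ g ∈ M, (X g : MvPolynomial (E n) ℂ)) * X e
            = (∏ g ∈ M.erase f, X g) * (X f * X e) := by
          rw [← Finset.mul_prod_erase M _ hfM]
          ring
        rw [hP]
        refine isCert_pair (q := (f, e)) ?_ _ ?_
        · refine Finset.mem_filter.mpr ⟨Finset.mem_product.mpr
            ⟨Finset.mem_univ _, Finset.mem_univ _⟩, ?_, ⟨u, huf, hue⟩⟩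
          exact fun h => hef h.symm
        · calc (∏ g ∈ M.erase f, (X g : MvPolynomial (E n) ℂ)).totalDegree
              ≤ ∑ g ∈ M.erase f, (X g : MvPolynomial (E n) ℂ).totalDegree :=
                MvPolynomial.totalDegree_finset_prod _ _
            _ = (M.erase f).card := by
                rw [Finset.sum_congr rfl
                  (fun g _ => MvPolynomial.totalDegree_X g),
                  Finset.sum_const, smul_eq_mul, mul_one]
            _ ≤ M.card := Finset.card_le_card (Finset.erase_subset _ _)
            _ ≤ d := hcardle
      · have huv : u ≠ v := other_ne hve
        have heM : e ∉ M := fun h => hv (mem_covered.mpr ⟨e, h, hve⟩)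
        have hIsM' : IsM (insert e M) := by
          rintro a ha b hb hab x ⟨hxa, hxb⟩
          rcases Finset.mem_insert.mp ha with ha' | ha' <;>
            rcases Finset.mem_insert.mp hb with hb' | hb'
          · exact hab (ha'.trans hb'.symm)
          · subst ha'
            rcases Sym2.mem_iff.mp (hspec ▸ hxa) with h | h
            · exact hv (mem_covered.mpr ⟨b, hb', h ▸ hxb⟩)
            · exact hucov (mem_covered.mpr ⟨b, hb', h ▸ hxb⟩)
          · subst hb'
            rcases Sym2.mem_iff.mp (hspec ▸ hxb) with h | h
            · exact hv (mem_covered.mpr ⟨a, ha', h ▸ hxa⟩)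
            · exact hucov (mem_covered.mpr ⟨a, ha', h ▸ hxa⟩)
          · exact hM a ha' b hb' hab x ⟨hxa, hxb⟩
        rw [mul_comm, ← Finset.prod_insert heM]
        exact ih (insert e M) hIsM'
          (by rw [Finset.card_insert_of_notMem heM]; omega)
    · exact isCert_gV v _ (by rw [MvPolynomial.totalDegree_neg]; exact hdegM)

lemma isCert_one {d : ℕ} (hnd : n = 2*d+1) : IsCert n d 1 := by
  have := isCert_matching hnd (d+1) ∅ (by rintro e he; simp at he)
    (by simp)
  simpa using this

end Stmt19


/-- For odd `n ≥ 3`, the perfect-matching system of `K_n`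
has no common zero over `ℂ`, there is a Nullstellensatz certificate of degree
`(n−1)/2`, and every Nullstellensatz certificate has degree at least
`(n−1)/2`. -/
theorem stmt19 (n : ℕ) (hn : 3 ≤ n) (hodd : Odd n) :
    (¬ ∃ z : ↥(SimpleGraph.completeGraph (Fin n)).edgeSet → ℂ,
      (∀ v : Fin n,
        (∑ e ∈ Finset.univ.filter
            (fun e : ↥(SimpleGraph.completeGraph (Fin n)).edgeSet =>
              v ∈ (e : Sym2 (Fin n))), z e) - 1 = 0) ∧
      (∀ e e' : ↥(SimpleGraph.completeGraph (Fin n)).edgeSet, e ≠ e' →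
        (∃ v : Fin n, v ∈ (e : Sym2 (Fin n)) ∧ v ∈ (e' : Sym2 (Fin n))) →
        z e * z e' = 0)) ∧
    (∃ (Δ : Fin n → MvPolynomial ↥(SimpleGraph.completeGraph (Fin n)).edgeSet ℂ)
      (Θ : ↥(SimpleGraph.completeGraph (Fin n)).edgeSet →
        ↥(SimpleGraph.completeGraph (Fin n)).edgeSet →
        MvPolynomial ↥(SimpleGraph.completeGraph (Fin n)).edgeSet ℂ),
      (∑ v : Fin n, Δ v * pmVertexPoly (SimpleGraph.completeGraph (Fin n)) v) +
          pairSum (SimpleGraph.completeGraph (Fin n)) Θ = 1 ∧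
      pmCertDeg (SimpleGraph.completeGraph (Fin n)) Δ Θ = (n - 1) / 2) ∧
    (∀ (Δ : Fin n → MvPolynomial ↥(SimpleGraph.completeGraph (Fin n)).edgeSet ℂ)
      (Θ : ↥(SimpleGraph.completeGraph (Fin n)).edgeSet →
        ↥(SimpleGraph.completeGraph (Fin n)).edgeSet →
        MvPolynomial ↥(SimpleGraph.completeGraph (Fin n)).edgeSet ℂ),
      (∑ v : Fin n, Δ v * pmVertexPoly (SimpleGraph.completeGraph (Fin n)) v) +
          pairSum (SimpleGraph.completeGraph (Fin n)) Θ = 1 →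
      (n - 1) / 2 ≤ pmCertDeg (SimpleGraph.completeGraph (Fin n)) Δ Θ) := by
  obtain ⟨d', hd'⟩ := hodd
  have hd : n = 2 * ((n-1)/2) + 1 := by omega
  obtain ⟨Δ₀, Θ₀, hΔ₀, hΘ₀, h1⟩ := Stmt19.isCert_one (n := n) hd
  have hcert : (∑ v : Fin n, Δ₀ v * pmVertexPoly (SimpleGraph.completeGraph (Fin n)) v)
      + pairSum (SimpleGraph.completeGraph (Fin n)) Θ₀ = 1 := h1.symm
  refine ⟨?_, ⟨Δ₀, Θ₀, hcert, ?_⟩, fun Δ Θ h => Stmt19.lower hd Δ Θ h⟩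
  · rintro ⟨z, hz1, hz2⟩
    have heval := congrArg (MvPolynomial.eval z) hcert
    rw [map_add, map_sum, map_one] at heval
    have hV : ∀ v : Fin n,
        MvPolynomial.eval z (pmVertexPoly (SimpleGraph.completeGraph (Fin n)) v) = 0 := by
      intro v
      rw [pmVertexPoly, map_sub, map_sum, map_one,
        Finset.sum_congr rfl fun e _ => MvPolynomial.eval_X (f := z) e]
      exact hz1 v
    rw [Finset.sum_eq_zero (fun v _ => by rw [map_mul, hV v, mul_zero]),
      pairSum, map_sum,
      Finset.sum_eq_zero (fun (q : _ × _) hq => by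
        obtain ⟨-, hne, hsh⟩ := Stmt19.mem_filter' hq
        rw [map_mul, map_mul, MvPolynomial.eval_X, MvPolynomial.eval_X,
          hz2 q.1 q.2 hne hsh, mul_zero])] at heval
    norm_num at heval
  · apply le_antisymm
    · exact max_le (Finset.sup_le fun v _ => hΔ₀ v)
        (Finset.sup_le fun q _ => hΘ₀ q.1 q.2)
    · exact Stmt19.lower hd Δ₀ Θ₀ hcert
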